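/- Tang–Lin theorem (base case): for 2 voters and a 3-element set of alternatives, every social welfare function satisfying independence of irrelevant alternatives is dictatorial, or inversely dictatorial, or its range has at most 2 linear orders whose Kendall tau distance is at most 1. -/

import Mathlib

/-- A strict linear order on the 3-element set `Fin 3`, encoded as a boolean-valued
relation (`r a b = true` meaning `a` is ranked above `b`). -/
abbrev LO3 := {r : Fin 3 → Fin 3 → Bool // IsStrictTotalOrder (Fin 3) (fun a b => r a b = true)}

lemma LO3.mk_sto (r : Fin 3 → Fin 3 → Bool)
    (h₁ : ∀ a b, r a b = true ∨ a = b ∨ r b a = true)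
    (h₂ : ∀ a, ¬ r a a = true)
    (h₃ : ∀ a b c, r a b = true → r b c = true → r a c = true) :
    IsStrictTotalOrder (Fin 3) (fun a b => r a b = true) := by
  haveI : IsTrichotomous (Fin 3) (fun a b => r a b = true) := ⟨fun a b hab hba => ((h₁ a b).resolve_left hab).resolve_right hba⟩
  haveI : IsIrrefl (Fin 3) (fun a b => r a b = true) := ⟨h₂⟩
  haveI : IsTrans (Fin 3) (fun a b => r a b = true) := ⟨h₃⟩
  haveI : IsStrictOrder (Fin 3) (fun a b => r a b = true) := ⟨⟩
  exact ⟨⟩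

/-- The reverse (inverse) of a strict linear order. -/
def LO3.rev (r : LO3) : LO3 :=
  ⟨fun a b => r.val b a, by
    haveI := r.prop
    exact @IsStrictTotalOrder.swap (Fin 3) (fun a b => r.val a b = true) _⟩

/-- Kendall tau distance: the number of (unordered) pairs on which two orders disagree. -/
def kendall (r s : LO3) : ℕ :=
  (Finset.univ.filter
    (fun p : Fin 3 × Fin 3 => p.1 < p.2 ∧ r.val p.1 p.2 ≠ s.val p.1 p.2)).card

/-- Independence of irrelevant alternatives for a two-voter SWF on `Fin 3`. -/
def IIA2 (W : (Fin 2 → LO3) → LO3) : Prop :=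
  ∀ π π' : Fin 2 → LO3, ∀ a b : Fin 3,
    (∀ v, (π v).val a b = (π' v).val a b) → (W π).val a b = (W π').val a b

/-- Unanimity for a two-voter SWF on `Fin 3`. -/
def Unanimity2 (W : (Fin 2 → LO3) → LO3) : Prop :=
  ∀ π : Fin 2 → LO3, ∀ a b : Fin 3, (∀ v, (π v).val a b = true) → (W π).val a b = true

def Dictatorial (W : (Fin 2 → LO3) → LO3) : Prop := ∃ d, ∀ π, W π = π d

def InverselyDictatorial (W : (Fin 2 → LO3) → LO3) : Prop := ∃ d, ∀ π, W π = (π d).rev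

/-!
Record a linear order on `Fin 3` by the orientations `cyc i` of the arcs `i → i + 1` of the
cycle `0 → 1 → 2 → 0`. A tournament on three vertices is transitive iff it is not a directed
cycle, so the linear orders correspond exactly to the not-all-equal bit triples. By IIA the
social order is computed arc by arc from three binary Boolean functions `f i`, which must
therefore map pairs of not-all-equal triples to not-all-equal triples.

If some `f k` is constant, the other two arcs cannot both take its value, so one of them is
the opposite constant and the social order varies in one pair only. If no `f k` is constant,
profiles of the shape `(x, ¬x, z)` with `z` chosen so that `f (k + 2)` agrees with `f k` force
`f (k + 1) x y = ¬ f k (¬x) (¬y)`. Going once around the cycle, all three functions are equal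
and self-dual, and the self-dual binary Boolean functions are the projections and their
negations.
-/

lemma Fin.eq_or_eq_add_one_or_eq_add_two (k m : Fin 3) : m = k ∨ m = k + 1 ∨ m = k + 2 := by
  revert k m; decide

def rotVec (k : Fin 3) (a b c : Bool) (m : Fin 3) : Bool := ![a, b, c] (m - k)

@[simp] lemma rotVec_self (k : Fin 3) (a b c : Bool) : rotVec k a b c k = a := by simp [rotVec]

@[simp] lemma rotVec_add_one (k : Fin 3) (a b c : Bool) : rotVec k a b c (k + 1) = b := by
  simp [rotVec]

@[simp] lemma rotVec_add_two (k : Fin 3) (a b c : Bool) : rotVec k a b c (k + 2) = c := by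
  simp [rotVec]

def NotAllEqual (t : Fin 3 → Bool) : Prop := ∃ i j, t i ≠ t j

namespace NotAllEqual

lemma rotVec {a b : Bool} (hab : a ≠ b) (k : Fin 3) (c : Bool) : NotAllEqual (rotVec k a b c) :=
  ⟨k, k + 1, by simpa⟩

lemma ne_of_eq {t : Fin 3 → Bool} (ht : NotAllEqual t) {k : Fin 3} (h : t (k + 2) = t k) :
    t (k + 1) ≠ t k := by
  intro h'
  obtain ⟨i, j, hij⟩ := ht
  have key : ∀ m, t m = t k := fun m => by
    rcases Fin.eq_or_eq_add_one_or_eq_add_two k m with rfl | rfl | rfl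
    exacts [rfl, h', h]
  exact hij ((key i).trans (key j).symm)

end NotAllEqual

def negDual (g : Bool → Bool → Bool) (x y : Bool) : Bool := !g (!x) (!y)

@[simp] lemma negDual_negDual (g : Bool → Bool → Bool) : negDual (negDual g) = g := by
  funext x y; simp [negDual]

lemma eq_proj_of_negDual_eq {g : Bool → Bool → Bool} (h : negDual g = g) :
    g = (fun x _ => x) ∨ g = (fun _ y => y) ∨ g = (fun x _ => !x) ∨ g = (fun _ y => !y) := by
  have h₁ := congrFun₂ h false false
  have h₂ := congrFun₂ h false true
  simp only [negDual, Bool.not_false, Bool.not_true] at h₁ h₂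
  simp only [funext_iff, Bool.forall_bool]
  cases hff : g false false <;> cases hft : g false true <;> simp_all

def IsNAEPolymorphism (f : Fin 3 → Bool → Bool → Bool) : Prop :=
  ∀ u v, NotAllEqual u → NotAllEqual v → NotAllEqual fun i => f i (u i) (v i)

namespace IsNAEPolymorphism

variable {f : Fin 3 → Bool → Bool → Bool}

lemma eq_negDual (hf : IsNAEPolymorphism f) (k : Fin 3) (hk : ∀ c, ∃ x y, f (k + 2) x y ≠ c) :
    f (k + 1) = negDual (f k) := by
  funext x y
  obtain ⟨z, w, hzw⟩ := hk !(f k (!x) (!y))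
  have := (hf (rotVec k (!x) x z) (rotVec k (!y) y w) (.rotVec (by simp) k z)
    (.rotVec (by simp) k w)).ne_of_eq (k := k)
  simp only [rotVec_self, rotVec_add_one, rotVec_add_two] at this
  exact Bool.eq_not_iff.mpr (this (by simpa using hzw))

lemma const_or_const (hf : IsNAEPolymorphism f) (k : Fin 3) (c : Bool)
    (hk : ∀ x y, f k x y = c) :
    (∀ x y, f (k + 1) x y = !c) ∨ (∀ x y, f (k + 2) x y = !c) := by
  by_contra! ⟨⟨x, y, hxy⟩, ⟨x', y', hxy'⟩⟩
  have := (hf (rotVec k (!x) x x') (rotVec k (!y) y y') (.rotVec (by simp) k x')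
    (.rotVec (by simp) k y')).ne_of_eq (k := k)
  simp only [rotVec_self, rotVec_add_one, rotVec_add_two] at this
  exact this (by simpa [hk] using hxy') (by simpa [hk] using hxy)

theorem classification (hf : IsNAEPolymorphism f) :
    (∀ i, f i = fun x _ => x) ∨ (∀ i, f i = fun _ y => y) ∨
      (∀ i, f i = fun x _ => !x) ∨ (∀ i, f i = fun _ y => !y) ∨
      ∃ l, ∀ i ≠ l, ∃ c, ∀ x y, f i x y = c := by
  by_cases hconst : ∃ k c, ∀ x y, f k x y = c
  · obtain ⟨k, c, hk⟩ := hconst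
    refine .inr <| .inr <| .inr <| .inr ?_
    rcases hf.const_or_const k c hk with h | h
    · refine ⟨k + 2, fun i hi => ?_⟩
      rcases Fin.eq_or_eq_add_one_or_eq_add_two k i with rfl | rfl | rfl
      exacts [⟨c, hk⟩, ⟨!c, h⟩, absurd rfl hi]
    · refine ⟨k + 1, fun i hi => ?_⟩
      rcases Fin.eq_or_eq_add_one_or_eq_add_two k i with rfl | rfl | rfl
      exacts [⟨c, hk⟩, absurd rfl hi, ⟨!c, h⟩]
  push Not at hconst
  have h₀ : f 1 = negDual (f 0) := hf.eq_negDual 0 (hconst _)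
  have h₁ : f 2 = negDual (f 1) := hf.eq_negDual 1 (hconst _)
  have h₂ : f 0 = negDual (f 2) := hf.eq_negDual 2 (hconst _)
  have h₀₁ : f 0 = f 1 := by rw [h₂, h₁, negDual_negDual]
  have hself : negDual (f 0) = f 0 := h₀.symm.trans h₀₁.symm
  have hall : ∀ i, f i = f 0
    | 0 => rfl
    | 1 => h₀₁.symm
    | 2 => by rw [h₁, ← h₀₁, hself]
  rcases eq_proj_of_negDual_eq hself with h | h | h | h
  exacts [.inl fun i => (hall i).trans h, .inr <| .inl fun i => (hall i).trans h,
    .inr <| .inr <| .inl fun i => (hall i).trans h,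
    .inr <| .inr <| .inr <| .inl fun i => (hall i).trans h]

end IsNAEPolymorphism

def cycRel (t : Fin 3 → Bool) (a b : Fin 3) : Bool :=
  if b = a + 1 then t a else if a = b + 1 then !t b else false

lemma cycRel_isStrictTotalOrder {t : Fin 3 → Bool} (ht : NotAllEqual t) :
    IsStrictTotalOrder (Fin 3) (fun a b => cycRel t a b = true) := by
  refine LO3.mk_sto _ ?_ ?_ ?_ <;> revert t <;> unfold NotAllEqual <;> decide

lemma notAllEqual_of_cycRel_trans {t : Fin 3 → Bool}
    (h : ∀ a b c, cycRel t a b = true → cycRel t b c = true → cycRel t a c = true) :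
    NotAllEqual t := by
  revert t; unfold NotAllEqual; decide

instance : Inhabited LO3 :=
  ⟨⟨cycRel ![true, true, false], cycRel_isStrictTotalOrder ⟨0, 2, by decide⟩⟩⟩

namespace LO3

lemma val_self (r : LO3) (a : Fin 3) : r.val a a = false := by
  have := r.prop
  simpa using irrefl (r := fun a b => r.val a b = true) a

lemma val_trans (r : LO3) {a b c : Fin 3} (hab : r.val a b = true) (hbc : r.val b c = true) :
    r.val a c = true := by
  have := r.prop
  exact _root_.trans (r := fun a b => r.val a b = true) hab hbc

lemma val_swap (r : LO3) {a b : Fin 3} (hab : a ≠ b) : r.val b a = !r.val a b := by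
  have := r.prop
  have asymm : ¬(r.val a b = true ∧ r.val b a = true) := fun ⟨h₁, h₂⟩ => by
    simpa [r.val_self] using r.val_trans h₁ h₂
  rcases trichotomous_of (fun a b => r.val a b = true) a b with h | h | h
  · simp_all
  · exact absurd h hab
  · simp_all

def cyc (r : LO3) (i : Fin 3) : Bool := r.val i (i + 1)

lemma val_eq_cycRel (r : LO3) : r.val = cycRel r.cyc := by
  funext a b
  fin_cases a <;> fin_cases b <;>
    first | exact r.val_self _ | rfl | exact r.val_swap (by decide)

lemma cyc_injective : Function.Injective cyc := fun r s h =>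
  Subtype.ext (by rw [val_eq_cycRel r, val_eq_cycRel s, h])

lemma notAllEqual_cyc (r : LO3) : NotAllEqual r.cyc :=
  notAllEqual_of_cycRel_trans fun _ _ _ => by rw [← val_eq_cycRel]; exact r.val_trans

def ofCyc (t : Fin 3 → Bool) (ht : NotAllEqual t) : LO3 :=
  ⟨cycRel t, cycRel_isStrictTotalOrder ht⟩

@[simp] lemma cyc_ofCyc (t : Fin 3 → Bool) (ht : NotAllEqual t) : (ofCyc t ht).cyc = t := by
  funext i; simp [cyc, ofCyc, cycRel]

lemma cyc_rev (r : LO3) (i : Fin 3) : r.rev.cyc i = !r.cyc i :=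
  r.val_swap (by revert i; decide)

lemma kendall_eq_hammingDist (r s : LO3) : kendall r s = hammingDist r.cyc s.cyc := by
  unfold kendall
  rw [val_eq_cycRel r, val_eq_cycRel s]
  generalize r.cyc = t; generalize s.cyc = u
  revert t u; unfold hammingDist; decide

lemma exists_kendall_le_one_of_cyc_eq {α : Type*} [Nonempty α] (g : α → LO3) (l : Fin 3)
    (h : ∀ x y, ∀ i ≠ l, (g x).cyc i = (g y).cyc i) :
    ∃ r s, kendall r s ≤ 1 ∧ ∀ x, g x = r ∨ g x = s := by
  obtain ⟨a⟩ := ‹Nonempty α›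
  have eq_of_cyc_eq : ∀ x y, (g x).cyc l = (g y).cyc l → g x = g y := fun x y hl =>
    cyc_injective <| funext fun i => by
      by_cases hi : i = l
      · exact hi ▸ hl
      · exact h x y i hi
  by_cases hconst : ∀ x, g x = g a
  · exact ⟨g a, g a, by simp [kendall_eq_hammingDist], fun x => .inl (hconst x)⟩
  push Not at hconst
  obtain ⟨b, hb⟩ := hconst
  have hl : (g b).cyc l ≠ (g a).cyc l := fun hl => hb (eq_of_cyc_eq b a hl)
  refine ⟨g a, g b, ?_, fun x => ?_⟩
  · rw [kendall_eq_hammingDist, hammingDist, Finset.card_le_one]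
    simp only [Finset.mem_filter, Finset.mem_univ, true_and]
    intro i hi j hj
    rw [not_imp_comm.mp (h a b i) hi, not_imp_comm.mp (h a b j) hj]
  · obtain hxa | hxb : (g x).cyc l = (g a).cyc l ∨ (g x).cyc l = (g b).cyc l := by
      revert hl; cases (g x).cyc l <;> cases (g a).cyc l <;> cases (g b).cyc l <;> simp
    exacts [.inl (eq_of_cyc_eq x a hxa), .inr (eq_of_cyc_eq x b hxb)]

end LO3

lemma IIA2.exists_cyc_eq {W : (Fin 2 → LO3) → LO3} (hW : IIA2 W) :
    ∃ f : Fin 3 → Bool → Bool → Bool,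
      ∀ π i, (W π).cyc i = f i ((π 0).cyc i) ((π 1).cyc i) := by
  let rep (i : Fin 3) (x : Bool) : LO3 := .ofCyc (rotVec i x (!x) x) (.rotVec (by simp) i x)
  have cyc_rep (i : Fin 3) (x : Bool) : (rep i x).cyc i = x := by simp [rep]
  refine ⟨fun i x y => (W ![rep i x, rep i y]).cyc i,
    fun π i => hW _ _ i (i + 1) fun v => ?_⟩
  fin_cases v
  exacts [(cyc_rep i _).symm, (cyc_rep i _).symm]

lemma IsNAEPolymorphism.of_cyc_eq {W : (Fin 2 → LO3) → LO3}
    {f : Fin 3 → Bool → Bool → Bool}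
    (hf : ∀ π i, (W π).cyc i = f i ((π 0).cyc i) ((π 1).cyc i)) : IsNAEPolymorphism f :=
  fun u v hu hv => by
    convert (W ![.ofCyc u hu, .ofCyc v hv]).notAllEqual_cyc using 1
    funext i
    simp [hf]

/-- Tang–Lin theorem (base case): for 2 voters and a 3-element set of alternatives,
every social welfare function satisfying independence of irrelevant alternatives is
dictatorial, or inversely dictatorial, or its range consists of at most 2 linear
orders whose Kendall tau distance is at most 1. -/
theorem tang_lin_base_case (W : (Fin 2 → LO3) → LO3) (hIIA : IIA2 W) :
    Dictatorial W ∨ InverselyDictatorial W ∨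
      (∃ r s : LO3, kendall r s ≤ 1 ∧ ∀ π, W π = r ∨ W π = s) := by
  obtain ⟨f, hf⟩ := hIIA.exists_cyc_eq
  rcases (IsNAEPolymorphism.of_cyc_eq hf).classification with h | h | h | h | ⟨l, hl⟩
  · exact .inl ⟨0, fun π => LO3.cyc_injective <| funext fun i => by rw [hf, h]⟩
  · exact .inl ⟨1, fun π => LO3.cyc_injective <| funext fun i => by rw [hf, h]⟩
  · exact .inr <| .inl ⟨0, fun π => LO3.cyc_injective <| funext fun i => by
      rw [hf, h, LO3.cyc_rev]⟩
  · exact .inr <| .inl ⟨1, fun π => LO3.cyc_injective <| funext fun i => by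
      rw [hf, h, LO3.cyc_rev]⟩
  · refine .inr <| .inr <| LO3.exists_kendall_le_one_of_cyc_eq W l fun π π' i hi => ?_
    obtain ⟨c, hc⟩ := hl i hi
    rw [hf, hf, hc, hc]
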